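/- arXiv:1306.5809 — 2 statements merged into one kernel-verified Lean document; each statement's English description precedes it below -/
import Mathlib

section
/- Let N_2 be a divisor of r − 1, N_0 = (r−1)/(q−1), d_2 = gcd(N_0, N_2), and β = α^{N_0} (a generator of F_q^*). Then N_2/d_2 divides q − 1, and for every 0 ≤ i ≤ N_2/d_2 − 1 the coset α^{N_0 i}⟨α^{N_0 N_2/d_2}⟩ of F_r^* coincides, as a subset of F_r, with the coset β^i⟨β^{N_2/d_2}⟩ of F_q^* (with F_q viewed inside F_r); i.e., C_{N_0 i}^{(N_0 N_2/d_2, r)} = C_i^{(N_2/d_2, q)}. -/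
/-- The cyclotomic class `C_i^{(N,r)} = γ^i ⟨γ^N⟩` in a finite field. -/
def cClass (F : Type*) [Field F] (γ : Fˣ) (N i : ℕ) : Set F :=
  {x | ∃ t : ℕ, x = ((γ ^ (i + N * t) : Fˣ) : F)}

/-- with `β = α^{N₀}` a generator of `F_q^*`, `N₂/d₂ ∣ q - 1`, and for every
`0 ≤ i < N₂/d₂` the coset `C_{N₀ i}^{(N₀N₂/d₂, r)}` of `F_r^*` coincides with (the image in
`F_r` of) the coset `C_i^{(N₂/d₂, q)}` of `F_q^*`. -/
theorem stmt8 (p s m : ℕ) [Fact p.Prime] (hs : 0 < s) (hm : 0 < m)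
    (K F : Type*) [Field K] [Fintype K] [Field F] [Fintype F] [Algebra K F]
    (hq : Fintype.card K = p ^ s) (hr : Fintype.card F = Fintype.card K ^ m)
    (α : Fˣ) (hα : ∀ x : Fˣ, x ∈ Subgroup.zpowers α)
    (β : Kˣ) (hβ : algebraMap K F (β : K) = ((α ^ ((Fintype.card F - 1) / (Fintype.card K - 1)) : Fˣ) : F))
    (N₀ N₂ d₂ : ℕ) (hN₂ : N₂ ∣ Fintype.card F - 1)
    (hN₀ : N₀ = (Fintype.card F - 1) / (Fintype.card K - 1))
    (hd₂ : d₂ = Nat.gcd N₀ N₂) :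
    (N₂ / d₂ ∣ Fintype.card K - 1) ∧
    ∀ i < N₂ / d₂,
      (algebraMap K F) '' (cClass K β (N₂ / d₂) i) = cClass F α (N₀ * N₂ / d₂) (N₀ * i) := by
  set q := Fintype.card K with hqdef
  set r := Fintype.card F with hrdef
  have hq1 : 1 < q := Fintype.one_lt_card
  have hr1 : 1 < r := Fintype.one_lt_card
  have hdvd : q - 1 ∣ r - 1 := by
    rw [hr]
    simpa using Nat.sub_dvd_pow_sub_pow q 1 m
  have hN₀mul : N₀ * (q - 1) = r - 1 := by
    rw [hN₀]; exact Nat.div_mul_cancel hdvd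
  have hN₂pos : 0 < N₂ := by
    rcases Nat.eq_zero_or_pos N₂ with h | h
    · exfalso; rw [h] at hN₂; have := Nat.eq_zero_of_zero_dvd hN₂; omega
    · exact h
  have hd₂pos : 0 < d₂ := by
    rw [hd₂]; exact Nat.gcd_pos_of_pos_right _ hN₂pos
  have hd₂N₂ : d₂ ∣ N₂ := hd₂ ▸ Nat.gcd_dvd_right _ _
  have hd₂N₀ : d₂ ∣ N₀ := hd₂ ▸ Nat.gcd_dvd_left _ _
  have hcop : Nat.Coprime (N₂ / d₂) (N₀ / d₂) := by
    rw [hd₂]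
    exact Nat.Coprime.symm (Nat.coprime_div_gcd_div_gcd (hd₂ ▸ hd₂pos))
  constructor
  · -- N₂/d₂ ∣ q - 1
    obtain ⟨c, hc⟩ : N₂ ∣ N₀ * (q - 1) := hN₀mul ▸ hN₂
    have hb : (N₂ / d₂) ∣ (q - 1) * (N₀ / d₂) := by
      refine ⟨c, ?_⟩
      have : d₂ * ((q - 1) * (N₀ / d₂)) = d₂ * (N₂ / d₂ * c) := by
        calc d₂ * ((q - 1) * (N₀ / d₂)) = d₂ * (N₀ / d₂) * (q - 1) := by ring
          _ = d₂ * (N₂ / d₂) * c := by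
              rw [Nat.mul_div_cancel' hd₂N₀, Nat.mul_div_cancel' hd₂N₂]; exact hc
          _ = d₂ * (N₂ / d₂ * c) := by ring
      exact Nat.eq_of_mul_eq_mul_left hd₂pos this
    exact hcop.dvd_of_dvd_mul_right hb
  · intro i hi
    have hassoc : N₀ * N₂ / d₂ = N₀ * (N₂ / d₂) := Nat.mul_div_assoc N₀ hd₂N₂
    ext x
    simp only [cClass, Set.mem_image, Set.mem_setOf_eq]
    constructor
    · rintro ⟨y, ⟨t, rfl⟩, rfl⟩
      refine ⟨t, ?_⟩
      push_cast [map_pow, hβ, ← hN₀]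
      rw [← pow_mul]
      rw [hassoc]
      ring_nf
    · rintro ⟨t, rfl⟩
      refine ⟨((β ^ (i + N₂ / d₂ * t) : Kˣ) : K), ⟨t, rfl⟩, ?_⟩
      push_cast [map_pow, hβ, ← hN₀]
      rw [← pow_mul, hassoc]
      ring_nf
end

section
/- Let N_1, N_2 be divisors of r − 1, N_0 = (r−1)/(q−1), d_2 = gcd(N_0, N_2), d = gcd(N_0 N_2/d_2, N_1), and β = α^{N_0}. Then for every 0 ≤ i ≤ N_2/d_2 − 1, the product set C_i^{(N_2/d_2, q)} · C_0^{(N_1, r)} = {yx : y ∈ β^i⟨β^{N_2/d_2}⟩, x ∈ ⟨α^{N_1}⟩} equals the union of the cyclotomic classes C_{N_0(i + (N_2/d_2) i') mod N_1}^{(N_1, r)} over i' = 0, 1, …, N_1/d − 1. -/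
/-- for every `0 ≤ i < N₂/d₂`, the product set
`C_i^{(N₂/d₂, q)} · C_0^{(N₁, r)}` equals
`⋃_{i' < N₁/d} C_{N₀(i + (N₂/d₂)i') mod N₁}^{(N₁, r)}`. -/
theorem stmt11 (p s m : ℕ) [Fact p.Prime] (hs : 0 < s) (hm : 0 < m)
    (K F : Type*) [Field K] [Fintype K] [Field F] [Fintype F] [Algebra K F]
    (hq : Fintype.card K = p ^ s) (hr : Fintype.card F = Fintype.card K ^ m)
    (α : Fˣ) (hα : ∀ x : Fˣ, x ∈ Subgroup.zpowers α)
    (β : Kˣ)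
    (hβ : algebraMap K F (β : K)
        = ((α ^ ((Fintype.card F - 1) / (Fintype.card K - 1)) : Fˣ) : F))
    (N₀ N₁ N₂ d₂ d : ℕ)
    (hN₁ : N₁ ∣ Fintype.card F - 1) (hN₂ : N₂ ∣ Fintype.card F - 1)
    (hN₀ : N₀ = (Fintype.card F - 1) / (Fintype.card K - 1))
    (hd₂ : d₂ = Nat.gcd N₀ N₂)
    (hd : d = Nat.gcd (N₀ * N₂ / d₂) N₁) :
    ∀ i < N₂ / d₂,
      {x : F | ∃ y ∈ (algebraMap K F) '' (cClass K β (N₂ / d₂) i),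
          ∃ z ∈ cClass F α N₁ 0, x = y * z}
        = ⋃ i' ∈ Finset.range (N₁ / d),
            cClass F α N₁ (N₀ * (i + (N₂ / d₂) * i') % N₁) := by
  intro i hi
  have hF2 : 1 < Fintype.card F := Fintype.one_lt_card
  set R := Fintype.card F - 1 with hR
  have hRpos : 0 < R := by omega
  have hN₁pos : 0 < N₁ := Nat.pos_of_dvd_of_pos hN₁ hRpos
  have hd₂N₂ : d₂ ∣ N₂ := hd₂ ▸ Nat.gcd_dvd_right N₀ N₂
  set n := N₂ / d₂ with hn
  set A := N₀ * n with hA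
  have hdgcd : d = Nat.gcd A N₁ := by
    rw [hd, hA, hn, Nat.mul_div_assoc N₀ hd₂N₂]
  have hdA : d ∣ A := hdgcd ▸ Nat.gcd_dvd_left A N₁
  have hdN₁ : d ∣ N₁ := hdgcd ▸ Nat.gcd_dvd_right A N₁
  have hdpos : 0 < d := by
    rw [hdgcd]; exact Nat.gcd_pos_of_pos_right A hN₁pos
  set M := N₁ / d with hM
  have hMpos : 0 < M := Nat.div_pos (Nat.le_of_dvd hN₁pos hdN₁) hdpos
  have hdM : d * M = N₁ := by rw [hM]; exact Nat.mul_div_cancel' hdN₁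
  have hN₁AM : N₁ ∣ A * M := by
    obtain ⟨c, hc⟩ := hdA
    exact ⟨c, by rw [hc, mul_comm d c, mul_assoc, hdM, mul_comm]⟩
  have hord : orderOf α = R := by
    rw [orderOf_eq_card_of_forall_mem_zpowers hα, Nat.card_units, Nat.card_eq_fintype_card]
  have hpow : ∀ a b : ℕ, a ≡ b [MOD R] → ((α ^ a : Fˣ) : F) = ((α ^ b : Fˣ) : F) := by
    intro a b hab
    exact congrArg Units.val (pow_eq_pow_iff_modEq.mpr (by rw [hord]; exact hab))
  have hβ' : algebraMap K F (β : K) = ((α ^ N₀ : Fˣ) : F) := by rw [hβ, hN₀]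
  have hy : ∀ t : ℕ, algebraMap K F ((β ^ (i + n * t) : Kˣ) : K)
      = ((α ^ (N₀ * (i + n * t)) : Fˣ) : F) := by
    intro t
    rw [Units.val_pow_eq_pow_val, map_pow, hβ', ← Units.val_pow_eq_pow_val, ← pow_mul]
  ext x
  constructor
  · rintro ⟨y, ⟨w, ⟨t, rfl⟩, rfl⟩, z, ⟨u, rfl⟩, rfl⟩
    rw [hy t, ← Units.val_mul, ← pow_add]
    simp only [Set.mem_iUnion, Finset.mem_range, cClass, Set.mem_setOf_eq]
    set i' := t % M with hi'
    have hi'M : i' < M := Nat.mod_lt _ hMpos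
    set T := N₀ * (i + n * t) + (0 + N₁ * u) with hT
    refine ⟨i', hi'M, T / N₁, ?_⟩
    have ht : t = M * (t / M) + i' := (Nat.div_add_mod t M).symm
    have step1 : A * t ≡ A * i' [MOD N₁] := by
      have h0 : A * M * (t / M) ≡ 0 [MOD N₁] :=
        (Nat.modEq_zero_iff_dvd).mpr (Dvd.dvd.mul_right hN₁AM _)
      have h1 : A * M * (t / M) + A * i' ≡ 0 + A * i' [MOD N₁] := h0.add_right _
      have e : A * t = A * M * (t / M) + A * i' := by
        conv_lhs => rw [ht]
        ring
      rw [e]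
      simpa using h1
    have step2 : N₀ * (i + n * i') ≡ T [MOD N₁] := by
      have h1 : N₀ * i + A * i' ≡ N₀ * i + A * t [MOD N₁] := step1.symm.add_left _
      have hu : (N₀ * i + A * t) + 0 ≡ (N₀ * i + A * t) + N₁ * u [MOD N₁] :=
        (Nat.ModEq.refl _).add ((Nat.modEq_zero_iff_dvd.mpr (dvd_mul_right N₁ u)).symm)
      rw [add_zero] at hu
      have h3 := h1.trans hu
      have e1 : N₀ * (i + n * i') = N₀ * i + A * i' := by rw [hA]; ring
      have e2 : T = N₀ * i + A * t + N₁ * u := by rw [hT, hA]; ring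
      rw [e1, e2]; exact h3
    have hmod : N₀ * (i + n * i') % N₁ = T % N₁ := step2
    have hfin : N₀ * (i + n * i') % N₁ + N₁ * (T / N₁) = T := by
      rw [hmod]; exact Nat.mod_add_div T N₁
    rw [hfin]
  · intro hx
    simp only [Set.mem_iUnion, Finset.mem_range] at hx
    obtain ⟨i', hi', t', rfl⟩ := hx
    set X := N₀ * (i + n * i') with hX
    set Rq := R / N₁ with hRq
    have hRqmul : N₁ * Rq = R := Nat.mul_div_cancel' hN₁
    have hRqpos : 0 < Rq := Nat.div_pos (Nat.le_of_dvd hRpos hN₁) hN₁pos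
    set Q := X / N₁ with hQdef
    set k := Q / Rq with hk
    set c := Q % Rq with hc
    have hcR : c < Rq := Nat.mod_lt _ hRqpos
    have hQ : Rq * k + c = Q := Nat.div_add_mod Q Rq
    have hXd : N₁ * Q + X % N₁ = X := Nat.div_add_mod X N₁
    set u := t' + (Rq - c) with hu
    refine ⟨algebraMap K F ((β ^ (i + n * i') : Kˣ) : K), ⟨_, ⟨i', rfl⟩, rfl⟩,
      ((α ^ (0 + N₁ * u) : Fˣ) : F), ⟨u, rfl⟩, ?_⟩
    rw [hy i', ← Units.val_mul, ← pow_add]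
    apply hpow
    have h1 : Q + (Rq - c) = Rq * (k + 1) := by rw [mul_add, mul_one]; omega
    have key : X + N₁ * u = X % N₁ + N₁ * t' + R * (k + 1) := by
      calc X + N₁ * u = N₁ * Q + X % N₁ + N₁ * (t' + (Rq - c)) := by rw [hXd]
        _ = X % N₁ + N₁ * t' + N₁ * (Q + (Rq - c)) := by ring
        _ = X % N₁ + N₁ * t' + N₁ * (Rq * (k + 1)) := by rw [h1]
        _ = X % N₁ + N₁ * t' + R * (k + 1) := by rw [← hRqmul, mul_assoc]
    have goal : X % N₁ + N₁ * t' ≡ X + (0 + N₁ * u) [MOD R] := by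
      rw [zero_add, key]
      simp [Nat.ModEq, Nat.add_mul_mod_self_left]
    exact goal
end
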